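/- On ℝ² with the Euclidean metric, let μ = λ₁ + λ₂, where λ₁ is one-dimensional Lebesgue measure on the segment A = [0,1] × {0} (the pushforward of Lebesgue measure on [0,1] under x ↦ (x,0)) and λ₂ is two-dimensional Lebesgue measure. For n ≥ 1 let S_n = [0,1] × (2^{−n²}, 2^{−n²+1}) and f = Σ_{n=1}^{∞} 2^n χ_{S_n}. Then the non-centered maximal function satisfies Mf(x₀, y₀) < ∞ for every point (x₀, y₀) ∉ A; consequently {x ∈ ℝ² : Mf(x) = ∞} = A. -/

import Mathlib

open MeasureTheory Metric Filter Set ENNReal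

/-- The centered Hardy–Littlewood maximal function of `f` at `x`,
with respect to the measure `μ`. -/
noncomputable def centeredMaximal {X : Type*} [MeasurableSpace X] [PseudoMetricSpace X]
    (μ : Measure X) (f : X → ℝ) (x : X) : ℝ≥0∞ :=
  ⨆ (r : ℝ) (_ : 0 < r),
    (∫⁻ y in Metric.ball x r, ENNReal.ofReal |f y| ∂μ) / μ (Metric.ball x r)

/-- The non-centered Hardy–Littlewood maximal function of `f` at `x`:
the supremum is taken over all open balls containing `x`. -/
noncomputable def noncenteredMaximal {X : Type*} [MeasurableSpace X] [PseudoMetricSpace X]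
    (μ : Measure X) (f : X → ℝ) (x : X) : ℝ≥0∞ :=
  ⨆ (c : X) (r : ℝ) (_ : 0 < r) (_ : x ∈ Metric.ball c r),
    (∫⁻ y in Metric.ball c r, ENNReal.ofReal |f y| ∂μ) / μ (Metric.ball c r)

/-- `f ∈ L¹_loc(μ)`: `∫_B |f| dμ < ∞` for every open ball `B`. -/
def LocallyIntegrableBall {X : Type*} [MeasurableSpace X] [PseudoMetricSpace X]
    (μ : Measure X) (f : X → ℝ) : Prop :=
  ∀ (c : X) (r : ℝ), 0 < r → (∫⁻ y in Metric.ball c r, ENNReal.ofReal |f y| ∂μ) < ⊤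

/-!
The strip `S_n` lies within distance `2 ^ (1 - n²)` of the segment `A` and `f = 2 ^ n` on it, so
`|f| · dist(·, A) ≤ 2`. Hence off `A` the function `f` is bounded near the point, which controls
small balls through it, while large balls have Lebesgue measure bounded below and `f ∈ L¹(μ)`
(it vanishes on `A` and `∑ 2 ^ n 2 ^ (-n²) < ∞`).

At `(x₀, 0) ∈ A`, put `h = 2 ^ (-n²)` and take the ball of radius `4h` centred at height
`4h - h³`. It contains `(x₀, 0)`, meets `A` in an interval of length `O(h²)` and contains an
`h × h` square of `S_n`, so its `μ`-measure is `O(h²)` while `∫_B |f| dμ ≥ 2 ^ n h²`. Thus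
`Mf(x₀, 0) ≥ 2 ^ n / 80` for every `n`.
-/

section Maximal

variable {X : Type*} [MeasurableSpace X] [PseudoMetricSpace X] {μ : Measure X} {f : X → ℝ}

theorem setLIntegral_div_le_noncenteredMaximal {x c : X} {r : ℝ} (hr : 0 < r)
    (hx : x ∈ ball c r) :
    (∫⁻ y in ball c r, ENNReal.ofReal |f y| ∂μ) / μ (ball c r) ≤ noncenteredMaximal μ f x :=
  le_iSup_of_le c <| le_iSup_of_le r <| le_iSup_of_le hr <| le_iSup_of_le hx le_rfl

/-- Small balls through `x` lie in `ball x (2 * δ)`, where `|f| ≤ M`; large ones have measure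
at least `m`. -/
theorem noncenteredMaximal_le_max {x : X} {δ : ℝ} {M m : ℝ≥0∞}
    (hf : ∀ y ∈ ball x (2 * δ), ENNReal.ofReal |f y| ≤ M) (hμ : ∀ c, m ≤ μ (ball c δ)) :
    noncenteredMaximal μ f x ≤ max M ((∫⁻ y, ENNReal.ofReal |f y| ∂μ) / m) := by
  refine iSup_le fun c => iSup_le fun r => iSup_le fun _ => iSup_le fun hx => ?_
  rcases le_or_gt r δ with hrδ | hδr
  · have hsub : ball c r ⊆ ball x (2 * δ) := fun y hy => by
      rw [mem_ball] at hx hy ⊢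
      linarith [dist_triangle y c x, dist_comm c x]
    refine le_max_of_le_left (ENNReal.div_le_of_le_mul ?_)
    calc ∫⁻ y in ball c r, ENNReal.ofReal |f y| ∂μ ≤ ∫⁻ _ in ball c r, M ∂μ :=
          setLIntegral_mono measurable_const fun y hy => hf y (hsub hy)
      _ = M * μ (ball c r) := setLIntegral_const _ _
  · exact le_max_of_le_right <| ENNReal.div_le_div (setLIntegral_le_lintegral _ _)
      ((hμ c).trans (measure_mono (ball_subset_ball hδr.le)))

end Maximal

section Indicator

variable {ι α M : Type*} [AddCommMonoid M] [TopologicalSpace M] {s : ι → Set α} {a : ι → M}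
  {x : α}

theorem tsum_indicator_apply_of_mem (hs : Pairwise (Function.onFun Disjoint s)) {i : ι}
    (hx : x ∈ s i) : ∑' j, (s j).indicator (fun _ => a j) x = a i := by
  rw [tsum_eq_single i fun j hj => indicator_of_notMem (disjoint_left.mp (hs hj.symm) hx) _,
    indicator_of_mem hx]

theorem tsum_indicator_apply_of_forall_notMem (hx : ∀ i, x ∉ s i) :
    ∑' j, (s j).indicator (fun _ => a j) x = 0 := by
  simp [indicator_of_notMem (hx _)]

end Indicator

local notation "ℝ²" => EuclideanSpace ℝ (Fin 2)

namespace EuclideanSpace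

theorem dist_fin_two (p q : ℝ²) : dist p q = √((p 0 - q 0) ^ 2 + (p 1 - q 1) ^ 2) := by
  simp [EuclideanSpace.dist_eq, Fin.sum_univ_two, Real.dist_eq, sq_abs]

theorem measurableSet_setOf_fin_two {I J : Set ℝ} (hI : MeasurableSet I) (hJ : MeasurableSet J) :
    MeasurableSet {p : ℝ² | p 0 ∈ I ∧ p 1 ∈ J} :=
  (measurable_pi_apply 0 |>.comp (PiLp.continuous_ofLp 2 _).measurable hI).inter
    (measurable_pi_apply 1 |>.comp (PiLp.continuous_ofLp 2 _).measurable hJ)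

theorem volume_setOf_fin_two (I J : Set ℝ) :
    volume {p : ℝ² | p 0 ∈ I ∧ p 1 ∈ J} = volume I * volume J := by
  have : {p : ℝ² | p 0 ∈ I ∧ p 1 ∈ J} =
      (MeasurableEquiv.toLp 2 (Fin 2 → ℝ)).symm ⁻¹' univ.pi ![I, J] := by
    ext p
    simp [Fin.forall_fin_two, MeasurableEquiv.coe_toLp_symm]
  rw [this, (volume_preserving_symm_measurableEquiv_toLp (Fin 2)).measure_preimage_equiv,
    volume_pi_pi, Fin.prod_univ_two]
  rfl

end EuclideanSpace

namespace SegmentExample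

open EuclideanSpace

noncomputable def embed (x : ℝ) : ℝ² := WithLp.toLp 2 ![x, 0]

def unitSegment : Set ℝ² := embed '' Icc 0 1

noncomputable def segmentMeasure : Measure ℝ² :=
  Measure.map embed (volume.restrict (Icc 0 1)) + volume

def strip (n : ℕ) : Set ℝ² :=
  {p | p 0 ∈ Icc (0:ℝ) 1 ∧ p 1 ∈ Ioo ((2:ℝ) ^ (-(n:ℤ)^2)) ((2:ℝ) ^ (-(n:ℤ)^2 + 1))}

noncomputable def stripSum (p : ℝ²) : ℝ :=
  ∑' n : ℕ, (strip (n + 1)).indicator (fun _ => (2:ℝ) ^ (n + 1)) p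

def band (h : ℝ) : Set ℝ² := {p | p 0 ∈ Icc 0 1 ∧ p 1 ∈ Ioo h (2 * h)}

noncomputable def height (n : ℕ) : ℝ := 2 ^ (-(n:ℤ)^2)

theorem height_pos (n : ℕ) : 0 < height n := by unfold height; positivity

theorem height_le_one (n : ℕ) : height n ≤ 1 :=
  zpow_le_one_of_nonpos₀ one_le_two (by nlinarith)

theorem two_mul_height_le {m n : ℕ} (hmn : m < n) : 2 * height n ≤ height m := by
  unfold height
  rw [← zpow_one_add₀ two_ne_zero]
  exact zpow_le_zpow_right₀ one_le_two (by nlinarith)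

theorem two_pow_mul_height_le (n : ℕ) : 2 ^ (n + 1) * height (n + 1) ≤ (1 / 2) ^ n := by
  unfold height
  rw [← zpow_natCast, ← zpow_add₀ two_ne_zero, one_div, inv_pow, ← zpow_natCast, ← zpow_neg]
  exact zpow_le_zpow_right₀ one_le_two (by push_cast; nlinarith)

theorem strip_eq_band (n : ℕ) : strip n = band (height n) := by
  ext p
  simp only [strip, band, height, zpow_add_one₀ (two_ne_zero' ℝ), mul_comm]

theorem measurableSet_band (h : ℝ) : MeasurableSet (band h) :=
  measurableSet_setOf_fin_two measurableSet_Icc measurableSet_Ioo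

theorem measurableSet_strip (n : ℕ) : MeasurableSet (strip n) :=
  strip_eq_band n ▸ measurableSet_band _

theorem volume_band (h : ℝ) : volume (band h) = ENNReal.ofReal h := by
  rw [band, volume_setOf_fin_two, Real.volume_Icc, Real.volume_Ioo]
  ring_nf
  simp

theorem disjoint_band {h h' : ℝ} (hh : 2 * h ≤ h') : Disjoint (band h) (band h') :=
  disjoint_left.mpr fun _ hp hp' => by linarith [hp.2.2, hp'.2.1]

theorem pairwise_disjoint_strip :
    Pairwise (Function.onFun Disjoint fun n : ℕ => strip (n + 1)) := by
  intro m n hmn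
  simp only [Function.onFun, strip_eq_band]
  rcases lt_or_gt_of_ne hmn with h | h
  · exact (disjoint_band (two_mul_height_le (by omega))).symm
  · exact disjoint_band (two_mul_height_le (by omega))

theorem ofReal_abs_stripSum (p : ℝ²) :
    ENNReal.ofReal |stripSum p| = ∑' n : ℕ, (strip (n + 1)).indicator (fun _ => 2 ^ (n + 1)) p := by
  by_cases hp : ∃ n, p ∈ strip (n + 1)
  · obtain ⟨n, hn⟩ := hp
    rw [stripSum, tsum_indicator_apply_of_mem pairwise_disjoint_strip hn,
      tsum_indicator_apply_of_mem pairwise_disjoint_strip hn, abs_of_pos (by positivity),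
      ENNReal.ofReal_pow zero_le_two, ENNReal.ofReal_ofNat]
  · push Not at hp
    rw [stripSum, tsum_indicator_apply_of_forall_notMem hp,
      tsum_indicator_apply_of_forall_notMem hp, abs_zero, ENNReal.ofReal_zero]

theorem dist_embed (p : ℝ²) (x : ℝ) : dist p (embed x) = √((p 0 - x) ^ 2 + p 1 ^ 2) := by
  simp [dist_fin_two, embed]

theorem isometry_embed : Isometry embed :=
  Isometry.of_dist_eq fun x y => by
    rw [dist_embed]
    simp [embed, Real.sqrt_sq_eq_abs, Real.dist_eq]

theorem isClosed_unitSegment : IsClosed unitSegment :=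
  (isCompact_Icc.image isometry_embed.continuous).isClosed

theorem infDist_unitSegment_le {p : ℝ²} (hp : p 0 ∈ Icc 0 1) : infDist p unitSegment ≤ |p 1| :=
  calc infDist p unitSegment ≤ dist p (embed (p 0)) :=
        infDist_le_dist_of_mem (mem_image_of_mem _ hp)
    _ = |p 1| := by simp [dist_embed, Real.sqrt_sq_eq_abs]

theorem abs_stripSum_mul_infDist_le (p : ℝ²) : |stripSum p| * infDist p unitSegment ≤ 2 := by
  by_cases hp : ∃ n, p ∈ strip (n + 1)
  · obtain ⟨n, hn⟩ := hp
    rw [stripSum, tsum_indicator_apply_of_mem pairwise_disjoint_strip hn,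
      abs_of_pos (by positivity)]
    rw [strip_eq_band] at hn
    have hdist : infDist p unitSegment ≤ 2 * height (n + 1) :=
      calc infDist p unitSegment ≤ |p 1| := infDist_unitSegment_le hn.1
        _ = p 1 := abs_of_pos ((height_pos _).trans hn.2.1)
        _ ≤ 2 * height (n + 1) := hn.2.2.le
    calc (2:ℝ) ^ (n + 1) * infDist p unitSegment ≤ 2 ^ (n + 1) * (2 * height (n + 1)) := by gcongr
      _ = 2 * (2 ^ (n + 1) * height (n + 1)) := by ring
      _ ≤ 2 * (1 / 2) ^ n := by gcongr; exact two_pow_mul_height_le n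
      _ ≤ 2 := by simpa using pow_le_one₀ (n := n) (by norm_num : (0:ℝ) ≤ 1 / 2) (by norm_num)
  · push Not at hp
    rw [stripSum, tsum_indicator_apply_of_forall_notMem hp, abs_zero, zero_mul]
    exact zero_le_two

theorem stripSum_embed (x : ℝ) : stripSum (embed x) = 0 :=
  tsum_indicator_apply_of_forall_notMem fun n hn => by
    rw [strip_eq_band] at hn
    exact (height_pos _).not_ge hn.2.1.le

theorem lintegral_stripSum_volume_lt_top :
    ∫⁻ p, ENNReal.ofReal |stripSum p| < ⊤ := by
  have hterm (n : ℕ) : ∫⁻ p, (strip (n + 1)).indicator (fun _ => (2:ℝ≥0∞) ^ (n + 1)) p ≤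
      ENNReal.ofReal ((1 / 2) ^ n) := by
    rw [lintegral_indicator_const (measurableSet_strip _), strip_eq_band,
      volume_band, ← ENNReal.ofReal_ofNat, ← ENNReal.ofReal_pow zero_le_two,
      ← ENNReal.ofReal_mul (by positivity)]
    exact ENNReal.ofReal_le_ofReal (two_pow_mul_height_le n)
  simp_rw [ofReal_abs_stripSum]
  rw [lintegral_tsum fun n => (measurable_const.indicator (measurableSet_strip _)).aemeasurable]
  calc ∑' n, _ ≤ ∑' n : ℕ, ENNReal.ofReal ((1 / 2) ^ n) := ENNReal.tsum_le_tsum hterm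
    _ < ⊤ := by
      rw [← ENNReal.ofReal_tsum_of_nonneg (fun n => by positivity) summable_geometric_two]
      exact ENNReal.ofReal_lt_top

theorem lintegral_stripSum_lt_top : ∫⁻ p, ENNReal.ofReal |stripSum p| ∂segmentMeasure < ⊤ := by
  rw [segmentMeasure, lintegral_add_measure]
  refine ENNReal.add_lt_top.mpr ⟨?_, lintegral_stripSum_volume_lt_top⟩
  calc _ ≤ ∫⁻ x in Icc 0 1, ENNReal.ofReal |stripSum (embed x)| :=
        lintegral_map_le (fun p => ENNReal.ofReal |stripSum p|) embed
    _ < ⊤ := by simp [stripSum_embed]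

theorem noncenteredMaximal_stripSum_lt_top {p : ℝ²} (hp : p ∉ unitSegment) :
    noncenteredMaximal segmentMeasure stripSum p < ⊤ := by
  set d := infDist p unitSegment
  have hd : 0 < d := (isClosed_unitSegment.notMem_iff_infDist_pos ⟨embed 0, 0, by simp, rfl⟩).mp hp
  have hbound :
      ∀ y ∈ ball p (2 * (d / 4)), ENNReal.ofReal |stripSum y| ≤ ENNReal.ofReal (4 / d) := by
    intro y hy
    have hdy : d / 2 < infDist y unitSegment := by
      linarith [infDist_le_infDist_add_dist (x := p) (y := y) (s := unitSegment), mem_ball'.mp hy]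
    refine ENNReal.ofReal_le_ofReal ((le_div_iff₀ hd).mpr ?_)
    nlinarith [abs_stripSum_mul_infDist_le y, abs_nonneg (stripSum y)]
  have hμ (c : ℝ²) : volume (ball (0:ℝ²) (d / 4)) ≤ segmentMeasure (ball c (d / 4)) := by
    rw [← Measure.addHaar_ball_center volume c]
    exact Measure.le_add_left le_rfl _
  exact (noncenteredMaximal_le_max hbound hμ).trans_lt <| max_lt ENNReal.ofReal_lt_top <|
    ENNReal.div_lt_top lintegral_stripSum_lt_top.ne (measure_ball_pos _ _ (by positivity)).ne'

section TangentBall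

variable {x₀ h : ℝ}

noncomputable def tangentCenter (x₀ h : ℝ) : ℝ² := WithLp.toLp 2 ![x₀, 4 * h - h ^ 3]

theorem embed_mem_ball_tangentCenter (hh : 0 < h) (hh1 : h ≤ 1) :
    embed x₀ ∈ ball (tangentCenter x₀ h) (4 * h) := by
  rw [mem_ball, dist_fin_two, Real.sqrt_lt' (by positivity)]
  simp only [embed, tangentCenter, Matrix.cons_val_zero, Matrix.cons_val_one]
  have : h ^ 3 ≤ h := by nlinarith [pow_le_one₀ hh.le hh1 (n := 2)]
  nlinarith [pow_pos hh 3]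

theorem square_subset_ball_tangentCenter (hh : 0 < h) (hh1 : h ≤ 1) :
    {q : ℝ² | q 0 ∈ Icc (x₀ - h) (x₀ + h) ∧ q 1 ∈ Ioo h (2 * h)} ⊆
      ball (tangentCenter x₀ h) (4 * h) := by
  rintro q ⟨⟨hq₀, hq₀'⟩, hq₁, hq₁'⟩
  rw [mem_ball, dist_fin_two, Real.sqrt_lt' (by positivity)]
  simp only [tangentCenter, Matrix.cons_val_zero, Matrix.cons_val_one]
  have : h ^ 3 ≤ h := by nlinarith [pow_le_one₀ hh.le hh1 (n := 2)]
  nlinarith [pow_pos hh 3]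

theorem embed_preimage_ball_tangentCenter_subset (hh : 0 < h) :
    embed ⁻¹' ball (tangentCenter x₀ h) (4 * h) ⊆ Ioo (x₀ - 3 * h ^ 2) (x₀ + 3 * h ^ 2) := by
  intro x hx
  rw [mem_preimage, mem_ball, dist_fin_two, Real.sqrt_lt' (by positivity)] at hx
  simp only [embed, tangentCenter, Matrix.cons_val_zero, Matrix.cons_val_one] at hx
  have hsq : (x - x₀) ^ 2 < (3 * h ^ 2) ^ 2 := by nlinarith [pow_pos hh 6]
  have := abs_sub_lt_iff.mp (abs_lt_of_sq_lt_sq hsq (by positivity))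
  constructor <;> linarith

theorem segmentMeasure_ball_tangentCenter_le (hh : 0 < h) :
    segmentMeasure (ball (tangentCenter x₀ h) (4 * h)) ≤ ENNReal.ofReal (80 * h ^ 2) := by
  have hsegment : Measure.map embed (volume.restrict (Icc 0 1)) (ball (tangentCenter x₀ h) (4 * h))
      ≤ ENNReal.ofReal (16 * h ^ 2) := by
    rw [Measure.map_apply isometry_embed.continuous.measurable measurableSet_ball]
    calc _ ≤ volume (embed ⁻¹' ball (tangentCenter x₀ h) (4 * h)) := Measure.restrict_le_self _
      _ ≤ volume (Ioo (x₀ - 3 * h ^ 2) (x₀ + 3 * h ^ 2)) :=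
          measure_mono (embed_preimage_ball_tangentCenter_subset hh)
      _ ≤ ENNReal.ofReal (16 * h ^ 2) := by
          rw [Real.volume_Ioo]
          exact ENNReal.ofReal_le_ofReal (by nlinarith)
  have hplane : volume (ball (tangentCenter x₀ h) (4 * h)) ≤ ENNReal.ofReal (64 * h ^ 2) := by
    rw [volume_ball_fin_two, ← ENNReal.ofReal_pow (by positivity),
      ← ENNReal.ofReal_mul (by positivity)]
    exact ENNReal.ofReal_le_ofReal (by nlinarith [Real.pi_le_four])
  calc segmentMeasure (ball (tangentCenter x₀ h) (4 * h))
      ≤ ENNReal.ofReal (16 * h ^ 2) + ENNReal.ofReal (64 * h ^ 2) := add_le_add hsegment hplane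
    _ = ENNReal.ofReal (80 * h ^ 2) := by
        rw [← ENNReal.ofReal_add (by positivity) (by positivity)]
        ring_nf

theorem ofReal_sq_le_volume_ball_tangentCenter_inter_band (hx₀ : x₀ ∈ Icc 0 1) (hh : 0 < h)
    (hh1 : h ≤ 1) :
    ENNReal.ofReal (h ^ 2) ≤ volume (ball (tangentCenter x₀ h) (4 * h) ∩ band h) := by
  have hsub : {q : ℝ² | q 0 ∈ Icc (x₀ - h) (x₀ + h) ∩ Icc 0 1 ∧ q 1 ∈ Ioo h (2 * h)} ⊆
      ball (tangentCenter x₀ h) (4 * h) ∩ band h := fun q hq =>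
    ⟨square_subset_ball_tangentCenter hh hh1 ⟨hq.1.1, hq.2⟩, hq.1.2, hq.2⟩
  refine le_trans ?_ (measure_mono hsub)
  rw [volume_setOf_fin_two, Icc_inter_Icc, Real.volume_Icc, Real.volume_Ioo, sq,
    ENNReal.ofReal_mul hh.le]
  gcongr
  · rcases max_cases (x₀ - h) 0 with ⟨hmax, -⟩ | ⟨hmax, -⟩ <;>
      rcases min_cases (x₀ + h) 1 with ⟨hmin, -⟩ | ⟨hmin, -⟩ <;>
      rw [hmax, hmin] <;> linarith [hx₀.1, hx₀.2]
  · linarith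

end TangentBall

theorem two_pow_mul_le_setLIntegral_ball_tangentCenter {x₀ : ℝ} (hx₀ : x₀ ∈ Icc 0 1) (n : ℕ) :
    2 ^ (n + 1) * ENNReal.ofReal (height (n + 1) ^ 2) ≤
      ∫⁻ y in ball (tangentCenter x₀ (height (n + 1))) (4 * height (n + 1)),
        ENNReal.ofReal |stripSum y| ∂segmentMeasure := by
  set h := height (n + 1)
  set B := ball (tangentCenter x₀ h) (4 * h)
  have hstrip : ∀ y ∈ B ∩ band h, (2:ℝ≥0∞) ^ (n + 1) ≤ ENNReal.ofReal |stripSum y| :=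
    fun y hy => by
      rw [ofReal_abs_stripSum, tsum_indicator_apply_of_mem pairwise_disjoint_strip
        (strip_eq_band _ ▸ hy.2 : y ∈ strip (n + 1))]
  calc 2 ^ (n + 1) * ENNReal.ofReal (h ^ 2) ≤ 2 ^ (n + 1) * volume (B ∩ band h) := by
        gcongr
        exact ofReal_sq_le_volume_ball_tangentCenter_inter_band hx₀ (height_pos _)
          (height_le_one _)
    _ = ∫⁻ _ in B ∩ band h, 2 ^ (n + 1) := (setLIntegral_const _ _).symm
    _ ≤ ∫⁻ y in B ∩ band h, ENNReal.ofReal |stripSum y| :=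
        setLIntegral_mono' (measurableSet_ball.inter (measurableSet_band h)) hstrip
    _ ≤ ∫⁻ y in B, ENNReal.ofReal |stripSum y| := lintegral_mono_set inter_subset_left
    _ ≤ ∫⁻ y in B, ENNReal.ofReal |stripSum y| ∂segmentMeasure :=
        lintegral_mono' (Measure.restrict_mono subset_rfl (Measure.le_add_left le_rfl)) le_rfl

theorem two_pow_div_le_noncenteredMaximal_embed {x₀ : ℝ} (hx₀ : x₀ ∈ Icc 0 1) (n : ℕ) :
    2 ^ (n + 1) / 80 ≤ noncenteredMaximal segmentMeasure stripSum (embed x₀) := by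
  set h := height (n + 1)
  have hh : 0 < h := height_pos _
  have hsq : ENNReal.ofReal (h ^ 2) ≠ 0 := (ENNReal.ofReal_pos.mpr (by positivity)).ne'
  calc (2:ℝ≥0∞) ^ (n + 1) / 80
      = 2 ^ (n + 1) * ENNReal.ofReal (h ^ 2) / (80 * ENNReal.ofReal (h ^ 2)) :=
        (ENNReal.mul_div_mul_right _ _ hsq ENNReal.ofReal_ne_top).symm
    _ ≤ (∫⁻ y in ball (tangentCenter x₀ h) (4 * h), ENNReal.ofReal |stripSum y| ∂segmentMeasure) /
          segmentMeasure (ball (tangentCenter x₀ h) (4 * h)) := by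
        refine ENNReal.div_le_div (two_pow_mul_le_setLIntegral_ball_tangentCenter hx₀ n) ?_
        refine (segmentMeasure_ball_tangentCenter_le hh).trans_eq ?_
        rw [ENNReal.ofReal_mul (by norm_num), ENNReal.ofReal_ofNat]
    _ ≤ noncenteredMaximal segmentMeasure stripSum (embed x₀) :=
        setLIntegral_div_le_noncenteredMaximal (by positivity)
          (embed_mem_ball_tangentCenter hh (height_le_one _))

theorem noncenteredMaximal_stripSum_embed {x₀ : ℝ} (hx₀ : x₀ ∈ Icc 0 1) :
    noncenteredMaximal segmentMeasure stripSum (embed x₀) = ⊤ := by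
  have hlim : Tendsto (fun n : ℕ => (2:ℝ≥0∞) ^ (n + 1) / 80) atTop (nhds ⊤) := by
    rw [← ENNReal.top_div_of_ne_top (by norm_num : (80:ℝ≥0∞) ≠ ⊤)]
    exact ENNReal.Tendsto.div_const ((ENNReal.tendsto_pow_atTop_nhds_top_iff.mpr one_lt_two).comp
      (tendsto_add_atTop_nat 1)) (Or.inl ENNReal.top_ne_zero)
  exact top_le_iff.mp (le_of_tendsto' hlim (two_pow_div_le_noncenteredMaximal_embed hx₀))

end SegmentExample

/-- On `ℝ²` with `μ = λ₁ + λ₂`, where `λ₁` is `1`-dimensional Lebesgue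
measure on the segment `A = [0,1] × {0}` and `λ₂` is `2`-dimensional Lebesgue measure, the
function `f = Σ_{n≥1} 2^n χ_{S_n}` with `S_n = [0,1] × (2^{−n²}, 2^{−n²+1})` satisfies
`Mf(x₀,y₀) < ∞` for every `(x₀,y₀) ∉ A`; consequently `{x : Mf(x) = ∞} = A`. -/
theorem maximal_finite_off_segment
    (e : ℝ → EuclideanSpace ℝ (Fin 2)) (he : e = fun x => (WithLp.toLp 2 ![x, 0] : EuclideanSpace ℝ (Fin 2)))
    (μ : Measure (EuclideanSpace ℝ (Fin 2)))
    (hμ : μ = Measure.map e (volume.restrict (Set.Icc (0:ℝ) 1)) + volume)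
    (A : Set (EuclideanSpace ℝ (Fin 2))) (hA : A = e '' Set.Icc (0:ℝ) 1)
    (S : ℕ → Set (EuclideanSpace ℝ (Fin 2)))
    (hS : S = fun n : ℕ => {p : EuclideanSpace ℝ (Fin 2) | p 0 ∈ Set.Icc (0:ℝ) 1 ∧
      p 1 ∈ Set.Ioo ((2:ℝ) ^ (-(n:ℤ)^2)) ((2:ℝ) ^ (-(n:ℤ)^2 + 1))})
    (f : EuclideanSpace ℝ (Fin 2) → ℝ)
    (hf : f = fun p => ∑' n : ℕ, Set.indicator (S (n+1)) (fun _ => (2:ℝ) ^ (n+1)) p) :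
    (∀ p : EuclideanSpace ℝ (Fin 2), p ∉ A → noncenteredMaximal μ f p < ⊤) ∧
    {p | noncenteredMaximal μ f p = ⊤} = A := by
  subst he hμ hA hS hf
  have finite_off (p : EuclideanSpace ℝ (Fin 2)) (hp : p ∉ SegmentExample.unitSegment) :=
    SegmentExample.noncenteredMaximal_stripSum_lt_top hp
  refine ⟨finite_off, Set.ext fun p => ⟨fun hp => ?_, ?_⟩⟩
  · by_contra hpA
    exact (finite_off p hpA).ne hp
  · rintro ⟨x₀, hx₀, rfl⟩
    exact SegmentExample.noncenteredMaximal_stripSum_embed hx₀
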